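/- Let Y be a proper metric space and let G be a topological group acting continuously by isometries on Y, such that the action is proper (for every compact K ⊆ Y the set {g ∈ G : g·K ∩ K ≠ ∅} is compact), the identity component G_0 of G is open in G, and the action is cocompact: there exist p ∈ Y and D > 0 such that for every y ∈ Y there is g ∈ G with d(y, g·p) ≤ D. For r > 0 let G^r be the subgroup of G generated by {g ∈ G : d(q, g·q) ≤ r for some q ∈ Y}. Then there exists δ > 0 such that G^r = G^δ for all r ∈ (0, δ]; moreover, G^δ equals the subgroup H of G generated by G_0 together with all isotropy subgroups G_q, q ∈ Y. -/

import Mathlib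

open scoped Pointwise

/-!
Let `H` be the subgroup generated by the identity component `G₀` and the stabilizers. It lies in
every `G^r`: stabilizers trivially, and `G₀` because `G^r` is a neighbourhood of `1`, hence an
open and closed subgroup. Conversely `H` is open and normal. By properness, the pairs `(g, q)`
with `q` in the ball `K = B̄(p, D)`, which meets every orbit, and `d(q, g·q) ≤ 1` form a compact
set, on which `d(q, g·q)` is positive off `H`; this gives `δ > 0` such that moving a point of `K`
by at most `δ` forces `g ∈ H`. Conjugating into `K`, every generator of `G^δ` lies in `H`.
-/

open Metric

section Group

variable {G : Type*} [Group G]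

theorem Subgroup.closure_normal_of_conj_mem {s : Set G}
    (hs : ∀ g : G, ∀ x ∈ s, g * x * g⁻¹ ∈ s) : (Subgroup.closure s).Normal := by
  have hconj : Group.conjugatesOfSet s = s := by
    refine Set.Subset.antisymm (fun y hy => ?_) Group.subset_conjugatesOfSet
    obtain ⟨x, hx, hxy⟩ := Group.mem_conjugatesOfSet_iff.1 hy
    obtain ⟨c, rfl⟩ := isConj_iff.1 hxy
    exact hs c x hx
  rw [← hconj]
  exact Subgroup.normalClosure_normal

variable [TopologicalSpace G] [IsTopologicalGroup G]

theorem conj_mem_connectedComponent_one (g : G) {x : G} (hx : x ∈ connectedComponent (1 : G)) :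
    g * x * g⁻¹ ∈ connectedComponent (1 : G) := by
  simpa using (IsTopologicalGroup.continuous_conj g).image_connectedComponent_subset 1 ⟨x, hx, rfl⟩

theorem Subgroup.connectedComponent_one_subset {H : Subgroup G} (hH : (H : Set G) ∈ nhds 1) :
    connectedComponent (1 : G) ⊆ H :=
  have hopen : IsOpen (H : Set G) := H.isOpen_of_mem_nhds hH
  IsClopen.connectedComponent_subset ⟨H.isClosed_of_isOpen hopen, hopen⟩ H.one_mem

end Group

section Stabilizers

variable (G Y : Type*) [Group G] [TopologicalSpace G] [MulAction G Y]

def componentStabilizerSubgroup : Subgroup G :=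
  Subgroup.closure (connectedComponent (1 : G) ∪ ⋃ q : Y, (MulAction.stabilizer G q : Set G))

variable {G Y}

theorem stabilizer_le_componentStabilizerSubgroup (q : Y) :
    MulAction.stabilizer G q ≤ componentStabilizerSubgroup G Y := fun _ hg =>
  Subgroup.subset_closure (Or.inr (Set.mem_iUnion.2 ⟨q, hg⟩))

variable [IsTopologicalGroup G]

instance componentStabilizerSubgroup_normal : (componentStabilizerSubgroup G Y).Normal := by
  refine Subgroup.closure_normal_of_conj_mem fun g x hx => ?_
  rcases hx with hx | hx
  · exact Or.inl (conj_mem_connectedComponent_one g hx)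
  · obtain ⟨q, hq⟩ := Set.mem_iUnion.1 hx
    refine Or.inr (Set.mem_iUnion.2 ⟨g • q, ?_⟩)
    simp [MulAction.mem_stabilizer_iff, mul_smul, MulAction.mem_stabilizer_iff.1 hq]

theorem isOpen_componentStabilizerSubgroup (hopen : IsOpen (connectedComponent (1 : G))) :
    IsOpen (componentStabilizerSubgroup G Y : Set G) :=
  Subgroup.isOpen_of_mem_nhds _ <| Filter.mem_of_superset (hopen.mem_nhds mem_connectedComponent)
    fun _ hg => Subgroup.subset_closure (Or.inl hg)

end Stabilizers

section Displacement

variable (G Y : Type*) [Group G] [MetricSpace Y] [MulAction G Y]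

/-- The subgroup `G^r`. -/
def displacementSubgroup (r : ℝ) : Subgroup G :=
  Subgroup.closure {g : G | ∃ q : Y, dist q (g • q) ≤ r}

variable {G Y}

theorem displacementSubgroup_mono {r s : ℝ} (hrs : r ≤ s) :
    displacementSubgroup G Y r ≤ displacementSubgroup G Y s :=
  Subgroup.closure_mono fun _ ⟨q, hq⟩ => ⟨q, hq.trans hrs⟩

theorem stabilizer_le_displacementSubgroup (q : Y) {r : ℝ} (hr : 0 ≤ r) :
    MulAction.stabilizer G q ≤ displacementSubgroup G Y r := fun g hg =>
  Subgroup.subset_closure ⟨q, by rw [MulAction.mem_stabilizer_iff.1 hg, dist_self]; exact hr⟩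

theorem displacementSubgroup_le_of_forall_closedBall [IsIsometricSMul G Y] {N : Subgroup G}
    [N.Normal] {p : Y} {D δ : ℝ} (hcover : ∀ y : Y, ∃ g : G, dist y (g • p) ≤ D)
    (hN : ∀ g : G, ∀ q ∈ closedBall p D, dist q (g • q) ≤ δ → g ∈ N) :
    displacementSubgroup G Y δ ≤ N := by
  refine (Subgroup.closure_le _).2 fun g ⟨q, hq⟩ => ?_
  obtain ⟨h, hh⟩ := hcover q
  have hqK : h⁻¹ • q ∈ closedBall p D := by
    rwa [mem_closedBall, ← dist_smul h, smul_inv_smul]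
  have hconj : h⁻¹ * g * h ∈ N := by
    refine hN _ _ hqK ?_
    rwa [mul_smul, mul_smul, smul_inv_smul, dist_smul]
  simpa [mul_assoc] using ‹N.Normal›.conj_mem _ hconj h

variable [TopologicalSpace G]

theorem displacementSubgroup_mem_nhds_one [ContinuousSMul G Y] [Nonempty Y] {r : ℝ}
    (hr : 0 < r) : (displacementSubgroup G Y r : Set G) ∈ nhds 1 := by
  obtain ⟨p⟩ := ‹Nonempty Y›
  have hopen : IsOpen {g : G | dist p (g • p) < r} :=
    isOpen_lt (continuous_const.dist (continuous_id.smul continuous_const)) continuous_const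
  refine Filter.mem_of_superset (hopen.mem_nhds (by simpa using hr)) fun g hg => ?_
  exact Subgroup.subset_closure ⟨p, hg.le⟩

theorem componentStabilizerSubgroup_le_displacementSubgroup [IsTopologicalGroup G]
    [ContinuousSMul G Y] [Nonempty Y] {r : ℝ} (hr : 0 < r) :
    componentStabilizerSubgroup G Y ≤ displacementSubgroup G Y r := by
  refine (Subgroup.closure_le _).2 (Set.union_subset ?_ (Set.iUnion_subset fun q => ?_))
  · exact Subgroup.connectedComponent_one_subset (displacementSubgroup_mem_nhds_one hr)
  · exact stabilizer_le_displacementSubgroup q hr.le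

theorem isCompact_setOf_dist_smul_le [ProperSpace Y] [ContinuousSMul G Y]
    (hproper : ∀ K : Set Y, IsCompact K → IsCompact {g : G | (g • K ∩ K).Nonempty})
    {K : Set Y} (hK : IsCompact K) (R : ℝ) :
    IsCompact {x : G × Y | x.2 ∈ K ∧ dist x.2 (x.1 • x.2) ≤ R} := by
  have hclosed : IsClosed {x : G × Y | x.2 ∈ K ∧ dist x.2 (x.1 • x.2) ≤ R} :=
    (hK.isClosed.preimage continuous_snd).inter
      (isClosed_le (continuous_snd.dist (continuous_fst.smul continuous_snd)) continuous_const)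
  refine ((hproper _ (hK.cthickening (r := R))).prod hK).of_isClosed_subset hclosed ?_
  rintro ⟨g, q⟩ ⟨hq, hdist⟩
  refine ⟨⟨g • q, Set.smul_mem_smul_set (self_subset_cthickening K hq), ?_⟩, hq⟩
  exact mem_cthickening_of_dist_le _ q R K hq (by rwa [dist_comm])

theorem exists_pos_forall_dist_smul_le_imp_mem [ProperSpace Y] [ContinuousSMul G Y]
    (hproper : ∀ K : Set Y, IsCompact K → IsCompact {g : G | (g • K ∩ K).Nonempty})
    {K : Set Y} (hK : IsCompact K) {U : Set G} (hU : IsOpen U)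
    (hfix : ∀ g : G, ∀ q ∈ K, g • q = q → g ∈ U) :
    ∃ δ > 0, ∀ g : G, ∀ q ∈ K, dist q (g • q) ≤ δ → g ∈ U := by
  set C := {x : G × Y | x.2 ∈ K ∧ dist x.2 (x.1 • x.2) ≤ 1} ∩ Prod.fst ⁻¹' Uᶜ
  have hC : IsCompact C := (isCompact_setOf_dist_smul_le hproper hK 1).inter_right
    (hU.isClosed_compl.preimage continuous_fst)
  have hpos : ∀ x ∈ C, 0 < dist x.2 (x.1 • x.2) := fun x ⟨⟨hxK, _⟩, hxU⟩ =>
    dist_pos.2 fun h => hxU (hfix x.1 x.2 hxK h.symm)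
  obtain ⟨ε, hε, hεC⟩ := hC.exists_forall_le' (f := fun x : G × Y => dist x.2 (x.1 • x.2))
    (continuous_snd.dist (continuous_fst.smul continuous_snd)).continuousOn hpos
  refine ⟨min 1 (ε / 2), by positivity, fun g q hq hdist => ?_⟩
  by_contra hg
  have := hεC (g, q) ⟨⟨hq, hdist.trans (min_le_left _ _)⟩, hg⟩
  linarith [hdist.trans (min_le_right 1 (ε / 2))]

end Displacement

/-- gap lemma, Lemma 6.1. Let `G` be a topological group acting continuously
by isometries on a proper metric space `Y`, with proper action, open identity component `G₀`,
and cocompact action. For `r > 0` let `G^r` be the subgroup generated by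
`{g : d(q, g·q) ≤ r for some q}`. Then there is `δ > 0` with `G^r = G^δ` for all `r ∈ (0, δ]`;
moreover `G^δ` is the subgroup generated by `G₀` together with all isotropy subgroups. -/
theorem gap_lemma
    {Y : Type*} [MetricSpace Y] [ProperSpace Y]
    {G : Type*} [Group G] [TopologicalSpace G] [IsTopologicalGroup G]
    [MulAction G Y] [IsIsometricSMul G Y] [ContinuousSMul G Y]
    (hproper : ∀ K : Set Y, IsCompact K → IsCompact {g : G | (g • K ∩ K).Nonempty})
    (hopen : IsOpen (connectedComponent (1 : G)))
    (hcocompact : ∃ p : Y, ∃ D > (0 : ℝ), ∀ y : Y, ∃ g : G, dist y (g • p) ≤ D) :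
    ∃ δ > 0,
      (∀ r : ℝ, 0 < r → r ≤ δ →
        Subgroup.closure {g : G | ∃ q : Y, dist q (g • q) ≤ r}
          = Subgroup.closure {g : G | ∃ q : Y, dist q (g • q) ≤ δ}) ∧
      Subgroup.closure {g : G | ∃ q : Y, dist q (g • q) ≤ δ}
        = Subgroup.closure
            (connectedComponent (1 : G) ∪ ⋃ q : Y, (MulAction.stabilizer G q : Set G)) := by
  obtain ⟨p, D, -, hcover⟩ := hcocompact
  have : Nonempty Y := ⟨p⟩
  obtain ⟨δ, hδ, hsmall⟩ := exists_pos_forall_dist_smul_le_imp_mem hproper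
    (isCompact_closedBall p D) (isOpen_componentStabilizerSubgroup hopen)
    fun g q _ hgq => stabilizer_le_componentStabilizerSubgroup q hgq
  have hδH : displacementSubgroup G Y δ = componentStabilizerSubgroup G Y :=
    le_antisymm (displacementSubgroup_le_of_forall_closedBall hcover hsmall)
      (componentStabilizerSubgroup_le_displacementSubgroup hδ)
  refine ⟨δ, hδ, fun r hr hrδ => le_antisymm (displacementSubgroup_mono hrδ) ?_, hδH⟩
  exact hδH.le.trans (componentStabilizerSubgroup_le_displacementSubgroup hr)
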